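/- arXiv:1909.01338 — 2 statements merged into one kernel-verified Lean document; each statement's English description precedes it below -/
import Mathlib

section
/- Let K/ℚ and K'/ℚ be finite Galois extensions of number fields with K ∩ K' = ℚ. Then the absolute discriminant D_{K'K} of the compositum divides D_K^{[K':ℚ]} · D_{K'}^{[K:ℚ]}. -/
/-!
The relative different of `K'K / K` divides the different of `K' / ℚ` extended to `K'K`, because
`K` and `K'` are linearly disjoint (which is where `K ∩ K' = ℚ` and `K / ℚ` Galois enter).
Taking absolute norms in the tower formula `D_{K'K} = D_K ^ [K'K : K] · N(𝔡_{K'K/K})` gives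
`N(𝔡_{K'K/K}) ∣ D_{K'} ^ [K'K : K']`, and linear disjointness identifies `[K'K : K] = [K' : ℚ]`
and `[K'K : K'] = [K : ℚ]`.
-/

open IntermediateField Module NumberField

namespace IntermediateField

variable {F E : Type*} [Field F] [Field E] [Algebra F E] (K₁ K₂ : IntermediateField F E)

theorem restrict_sup_restrict_eq_top :
    K₁.restrict (le_sup_left (b := K₂)) ⊔ K₂.restrict (le_sup_right (a := K₁)) = ⊤ := by
  rw [← lift_inj, lift_top, lift_sup, lift_restrict, lift_restrict]

variable {K₁ K₂} [FiniteDimensional F K₁] [FiniteDimensional F K₂]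

theorem LinearDisjoint.restrict (h : K₁.LinearDisjoint K₂) :
    (K₁.restrict (le_sup_left (b := K₂))).LinearDisjoint
      (K₂.restrict (le_sup_right (a := K₁))) := by
  let e₁ := restrictAlgEquiv (le_sup_left : K₁ ≤ K₁ ⊔ K₂)
  let e₂ := restrictAlgEquiv (le_sup_right : K₂ ≤ K₁ ⊔ K₂)
  have := e₁.toLinearEquiv.finiteDimensional
  have := e₂.toLinearEquiv.finiteDimensional
  apply LinearDisjoint.of_finrank_sup
  rw [restrict_sup_restrict_eq_top, finrank_top', h.finrank_sup, e₁.toLinearEquiv.finrank_eq,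
    e₂.toLinearEquiv.finrank_eq]

end IntermediateField

namespace NumberField

theorem natAbs_discr_dvd_natAbs_discr_pow_mul_natAbs_discr_pow {L : Type*} [Field L]
    [NumberField L] (K₁ K₂ : IntermediateField ℚ L) (h₁ : K₁.LinearDisjoint K₂)
    (h₂ : K₁ ⊔ K₂ = ⊤) :
    (discr L).natAbs ∣
      (discr K₁).natAbs ^ finrank ℚ K₂ * (discr K₂).natAbs ^ finrank ℚ K₁ := by
  let _ : Algebra (FractionRing (𝓞 K₁)) (FractionRing (𝓞 L)) := FractionRing.liftAlgebra _ _
  have hdiff : differentIdeal (𝓞 K₁) (𝓞 L) ∣ (differentIdeal ℤ (𝓞 K₂)).map (algebraMap _ _) :=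
    IsDedekindDomain.differentIdeal_dvd_map_differentIdeal ℤ (𝓞 L) (𝓞 K₁) (𝓞 K₂) h₁ h₂
  have hnorm := Ideal.absNorm_dvd_absNorm_of_le (Ideal.le_of_dvd hdiff)
  rw [Ideal.absNorm_algebraMap, absNorm_differentIdeal K₂,
    ← IsFractionRing.finrank_eq (𝓞 K₂) K₂ (𝓞 L) L, h₁.finrank_right_eq_finrank h₂] at hnorm
  rw [natAbs_discr_eq_absNorm_differentIdeal_mul_natAbs_discr_pow K₁ (𝓞 K₁) L (𝓞 L),
    h₁.finrank_left_eq_finrank h₂, mul_comm]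
  exact mul_dvd_mul_left _ hnorm

/-- `E` carries its canonical `ℚ`-algebra structure rather than an arbitrary `[Algebra ℚ E]`:
only then are the restrictions of `K₁`, `K₂` to `K₁ ⊔ K₂` intermediate fields of the number field
`K₁ ⊔ K₂` for its own `ℚ`-algebra structure, as the previous lemma needs. -/
theorem natAbs_discr_sup_dvd_natAbs_discr_pow_mul_natAbs_discr_pow {E : Type*} [Field E]
    [CharZero E] (K₁ K₂ : IntermediateField ℚ E) [FiniteDimensional ℚ K₁]
    [FiniteDimensional ℚ K₂] [NumberField K₁] [NumberField K₂] [NumberField ↥(K₁ ⊔ K₂)]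
    (h : K₁.LinearDisjoint K₂) :
    (discr ↥(K₁ ⊔ K₂)).natAbs ∣
      (discr K₁).natAbs ^ finrank ℚ K₂ * (discr K₂).natAbs ^ finrank ℚ K₁ := by
  let e₁ := restrictAlgEquiv (le_sup_left : K₁ ≤ K₁ ⊔ K₂)
  let e₂ := restrictAlgEquiv (le_sup_right : K₂ ≤ K₁ ⊔ K₂)
  convert natAbs_discr_dvd_natAbs_discr_pow_mul_natAbs_discr_pow _ _ h.restrict
    (restrict_sup_restrict_eq_top K₁ K₂) using 4
  · exact discr_eq_discr_of_algEquiv _ e₁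
  · exact e₂.toLinearEquiv.finrank_eq
  · exact discr_eq_discr_of_algEquiv _ e₂
  · exact e₁.toLinearEquiv.finrank_eq

end NumberField

theorem discr_compositum_dvd_general
    (K K' : IntermediateField ℚ (AlgebraicClosure ℚ))
    [FiniteDimensional ℚ K] [IsGalois ℚ K]
    [FiniteDimensional ℚ K']
    [NumberField ↥K] [NumberField ↥K'] [NumberField ↥(K ⊔ K')]
    (h : K ⊓ K' = ⊥) :
    (NumberField.discr ↥(K ⊔ K')).natAbs ∣
      (NumberField.discr ↥K).natAbs ^ (Module.finrank ℚ ↥K') *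
        (NumberField.discr ↥K').natAbs ^ (Module.finrank ℚ ↥K) := by
  -- `IsGalois ℚ K` is stated for the `ℚ`-algebra structure of the field `K`, while
  -- `LinearDisjoint.of_inf_eq_bot` asks for the one of `K` as an intermediate field.
  have hdisj : K.LinearDisjoint K' := @LinearDisjoint.of_inf_eq_bot _ _ _ _ _ K K'
    (by convert ‹IsGalois ℚ K›; exact Subsingleton.elim _ _) _ _ h
  exact natAbs_discr_sup_dvd_natAbs_discr_pow_mul_natAbs_discr_pow K K' hdisj

theorem discr_compositum_dvd
    (K K' : IntermediateField ℚ (AlgebraicClosure ℚ))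
    [FiniteDimensional ℚ K] [IsGalois ℚ K]
    [FiniteDimensional ℚ K'] [IsGalois ℚ K']
    [NumberField ↥K] [NumberField ↥K'] [NumberField ↥(K ⊔ K')]
    (h : K ⊓ K' = ⊥) :
    (NumberField.discr ↥(K ⊔ K')).natAbs ∣
      (NumberField.discr ↥K).natAbs ^ (Module.finrank ℚ ↥K') *
        (NumberField.discr ↥K').natAbs ^ (Module.finrank ℚ ↥K) :=
  discr_compositum_dvd_general K K' h
end

section
/- Let x ≥ 3, 0 < ε < 1/4, and let F(z) = e^{−(1+ε/log x)z} · ((1 − e^{(1/2+ε/log x)z})/(−z)) · ((1 − e^{εz/(2 log x)})/(−εz/(2 log x)))². Then for s = σ + it with σ > 0, one has |F(−s log x)| ≤ e^{σε} · x^{σ} · min{ 1, (1 + x^{−σ/2})/(|s| log x) · (4/(ε|s|))² }. -/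
/-!
At `z = -s log x` the weight factors as `e^{(log x + ε) s}` times
`(1 - e^{-(log x / 2 + ε) s}) / (s log x)` times `((1 - e^{-ε s / 2}) / (ε s / 2))²`, and the
first factor has modulus `e^{σ ε} x^σ`. For `Re w ≤ 0` one has `|1 - e^w| ≤ |w|`, since `|exp| ≤ 1`
on the left half-plane, and always `|1 - e^w| ≤ 1 + e^{Re w}`. The first estimate bounds both
quotients by `1` (this needs `log x ≥ 2ε`), the second gives the decay in `|s|`.
-/

namespace Complex

lemma norm_one_sub_exp_le_norm {w : ℂ} (hw : w.re ≤ 0) : ‖1 - exp w‖ ≤ ‖w‖ := by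
  have hderiv : ∀ z ∈ {c : ℂ | c.re ≤ 0}, ‖deriv exp z‖ ≤ 1 := fun z hz => by
    rw [deriv_exp, norm_exp, Real.exp_le_one_iff]
    exact hz
  simpa [norm_sub_rev] using (convex_halfSpace_re_le 0).norm_image_sub_le_of_norm_deriv_le
    (fun z _ => differentiableAt_exp) hderiv (show (0 : ℂ) ∈ {c : ℂ | c.re ≤ 0} by simp) hw

lemma norm_one_sub_exp_le (w : ℂ) : ‖1 - exp w‖ ≤ 1 + Real.exp w.re := by
  simpa [norm_exp] using norm_sub_le (1 : ℂ) (exp w)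

lemma norm_one_sub_exp_div_le_one {w v : ℂ} (hw : w.re ≤ 0) (hwv : ‖w‖ ≤ ‖v‖) :
    ‖(1 - exp w) / v‖ ≤ 1 := by
  rw [norm_div]
  exact div_le_one_of_le₀ ((norm_one_sub_exp_le_norm hw).trans hwv) (norm_nonneg v)

lemma norm_one_sub_exp_div_le (w v : ℂ) : ‖(1 - exp w) / v‖ ≤ (1 + Real.exp w.re) / ‖v‖ := by
  rw [norm_div]
  exact div_le_div_of_nonneg_right (norm_one_sub_exp_le w) (norm_nonneg v)

end Complex

section

open Complex

lemma weight_laplace_eq (L ε : ℝ) (hL : L ≠ 0) (s : ℂ) :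
    (fun z : ℂ =>
        exp (-(1 + (ε : ℂ) / (L : ℂ)) * z) *
          ((1 - exp ((1 / 2 + (ε : ℂ) / (L : ℂ)) * z)) / (-z)) *
            ((1 - exp ((ε : ℂ) * z / (2 * (L : ℂ)))) / (-((ε : ℂ) * z / (2 * (L : ℂ))))) ^ 2)
        (-s * L) =
      exp (((L + ε : ℝ) : ℂ) * s) * ((1 - exp (-(((L / 2 + ε : ℝ) : ℂ) * s))) / (s * L)) *
        ((1 - exp (-(((ε / 2 : ℝ) : ℂ) * s))) / (((ε / 2 : ℝ) : ℂ) * s)) ^ 2 := by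
  have hL' : (L : ℂ) ≠ 0 := ofReal_ne_zero.mpr hL
  push_cast
  congr 3 <;> field_simp

lemma norm_weight_factors_le {L ε : ℝ} {s : ℂ} (hε : 0 < ε) (hL : 2 * ε ≤ L) (hs : 0 < s.re) :
    ‖(1 - exp (-(((L / 2 + ε : ℝ) : ℂ) * s))) / (s * L)‖ *
        ‖(1 - exp (-(((ε / 2 : ℝ) : ℂ) * s))) / (((ε / 2 : ℝ) : ℂ) * s)‖ ^ 2 ≤
      min 1 ((1 + Real.exp (-(L / 2 * s.re))) / (‖s‖ * L) * (4 / (ε * ‖s‖)) ^ 2) := by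
  have hL0 : 0 < L := by linarith
  have hs0 : 0 < ‖s‖ := hs.trans_le (re_le_norm s)
  have hre (a : ℝ) : (-((a : ℂ) * s)).re = -(a * s.re) := by simp
  have hnorm (a : ℝ) (ha : 0 ≤ a) : ‖(a : ℂ) * s‖ = a * ‖s‖ := by
    rw [norm_mul, norm_real, Real.norm_of_nonneg ha]
  have hsL : ‖s * L‖ = ‖s‖ * L := by rw [mul_comm, hnorm L hL0.le, mul_comm]
  refine le_min ?_ ?_
  · refine mul_le_one₀ ?_ (by positivity) (pow_le_one₀ (norm_nonneg _) ?_)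
    · refine norm_one_sub_exp_div_le_one (by rw [hre]; nlinarith) ?_
      rw [norm_neg, hnorm _ (by positivity), hsL]
      nlinarith
    · exact norm_one_sub_exp_div_le_one (by rw [hre]; nlinarith) (norm_neg _).le
  · gcongr
    · refine (norm_one_sub_exp_div_le _ _).trans ?_
      rw [hre, hsL]
      gcongr
      nlinarith
    · refine (norm_one_sub_exp_div_le _ _).trans ?_
      rw [hre, hnorm _ (by positivity)]
      calc (1 + Real.exp (-(ε / 2 * s.re))) / (ε / 2 * ‖s‖) ≤ 2 / (ε / 2 * ‖s‖) := by
            gcongr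
            linarith [Real.exp_le_one_iff.mpr (by nlinarith : -(ε / 2 * s.re) ≤ 0)]
        _ = 4 / (ε * ‖s‖) := by field_simp; ring

end

open Complex in
theorem weight_laplace_bound (x ε : ℝ) (hx : 3 ≤ x) (hε0 : 0 < ε) (hε : ε < 1 / 4)
    (σ t : ℝ) (hσ : 0 < σ) :
    ‖(fun z : ℂ =>
        Complex.exp (-(1 + (ε : ℂ) / (Real.log x : ℂ)) * z) *
          ((1 - Complex.exp ((1 / 2 + (ε : ℂ) / (Real.log x : ℂ)) * z)) / (-z)) *
            ((1 - Complex.exp ((ε : ℂ) * z / (2 * (Real.log x : ℂ)))) /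
              (-((ε : ℂ) * z / (2 * (Real.log x : ℂ))))) ^ 2)
        (-((σ : ℂ) + (t : ℂ) * Complex.I) * (Real.log x : ℂ))‖
      ≤ Real.exp (σ * ε) * x ^ σ *
        min 1 ((1 + x ^ (-σ / 2)) / (‖(σ : ℂ) + (t : ℂ) * Complex.I‖ * Real.log x) *
          (4 / (ε * ‖(σ : ℂ) + (t : ℂ) * Complex.I‖)) ^ 2) := by
  have hx0 : 0 < x := by linarith
  have hL : 2 * ε ≤ Real.log x := by
    have := Real.log_two_gt_d9
    have := Real.log_le_log two_pos (by linarith : (2 : ℝ) ≤ x)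
    linarith
  set s : ℂ := σ + t * I
  have hsre : s.re = σ := by simp [s]
  have hexp : ‖exp (((Real.log x + ε : ℝ) : ℂ) * s)‖ = Real.exp (σ * ε) * x ^ σ := by
    rw [norm_exp, re_ofReal_mul, hsre, Real.rpow_def_of_pos hx0, ← Real.exp_add]
    ring_nf
  rw [weight_laplace_eq _ ε (by linarith), norm_mul, norm_mul, norm_pow, hexp, mul_assoc]
  have hdecay : x ^ (-σ / 2) = Real.exp (-(Real.log x / 2 * s.re)) := by
    rw [Real.rpow_def_of_pos hx0, hsre]
    ring_nf
  rw [hdecay]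
  gcongr
  exact norm_weight_factors_le hε0 hL (hsre ▸ hσ)
end
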